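/- Fix λ ≠ 0. A continuously differentiable covector field A : ℝ⁴ → ℝ⁴ satisfies the invariance conditions L_ξA = 0 for ξ = e₁, ξ = e₂, ξ = e₄ and ξ = e₂₄ + λe₃ = (0, x⁴, λ, x²) if and only if there exist constants C₁, C₂, C₃, C₄ ∈ ℝ such that for all x: A₁(x) = C₁, A₃(x) = C₃, A₂(x) = C₂·cosh(x³/λ) + C₄·sinh(x³/λ) and A₄(x) = −C₂·sinh(x³/λ) − C₄·cosh(x³/λ). (This is the class P₍₄,₆₎ for λ ≠ 0.) -/

import Mathlib

open Real

/-- Partial derivative of a scalar function on ℝ⁴ in the j-th coordinate direction. -/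
noncomputable def pd (j : Fin 4) (f : (Fin 4 → ℝ) → ℝ) (x : Fin 4 → ℝ) : ℝ :=
  fderiv ℝ f x (Pi.single j 1)

/-- The i-th component of the Lie derivative of the covector field A along
the vector field ξ at the point x:  Σ_j ξ^j ∂_j A_i + Σ_j A_j ∂_i ξ^j. -/
noncomputable def lieCov (ξ A : (Fin 4 → ℝ) → Fin 4 → ℝ) (x : Fin 4 → ℝ) (i : Fin 4) : ℝ :=
  (∑ j : Fin 4, ξ x j * pd j (fun y => A y i) x)
    + ∑ j : Fin 4, A x j * pd i (fun y => ξ y j) x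

/-- Invariance condition L_ξ A = 0 on all of ℝ⁴. -/
def PInvariant (ξ A : (Fin 4 → ℝ) → Fin 4 → ℝ) : Prop :=
  ∀ x i, lieCov ξ A x i = 0

/-- Invariance condition L_ξ A = 0 on a set M. -/
def PInvariantOn (ξ A : (Fin 4 → ℝ) → Fin 4 → ℝ) (M : Set (Fin 4 → ℝ)) : Prop :=
  ∀ x ∈ M, ∀ i, lieCov ξ A x i = 0

def e1 : (Fin 4 → ℝ) → Fin 4 → ℝ := fun _ => ![1, 0, 0, 0]
def e2 : (Fin 4 → ℝ) → Fin 4 → ℝ := fun _ => ![0, 1, 0, 0]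
def e3 : (Fin 4 → ℝ) → Fin 4 → ℝ := fun _ => ![0, 0, 1, 0]
def e4 : (Fin 4 → ℝ) → Fin 4 → ℝ := fun _ => ![0, 0, 0, 1]
def e12 : (Fin 4 → ℝ) → Fin 4 → ℝ := fun x => ![-x 1, x 0, 0, 0]
def e13 : (Fin 4 → ℝ) → Fin 4 → ℝ := fun x => ![x 2, 0, -x 0, 0]
def e23 : (Fin 4 → ℝ) → Fin 4 → ℝ := fun x => ![0, -x 2, x 1, 0]
def e14 : (Fin 4 → ℝ) → Fin 4 → ℝ := fun x => ![x 3, 0, 0, x 0]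
def e24 : (Fin 4 → ℝ) → Fin 4 → ℝ := fun x => ![0, x 3, 0, x 1]
def e34 : (Fin 4 → ℝ) → Fin 4 → ℝ := fun x => ![0, 0, x 3, x 2]

lemma pd_const (c : ℝ) (j : Fin 4) (x : Fin 4 → ℝ) : pd j (fun _ => c) x = 0 := by
  simp [pd]

lemma pd_proj (k j : Fin 4) (x : Fin 4 → ℝ) :
    pd j (fun y => y k) x = if k = j then 1 else 0 := by
  have h : (fun y : Fin 4 → ℝ => y k)
      = ⇑(ContinuousLinearMap.proj (R := ℝ) (φ := fun _ : Fin 4 => ℝ) k) := rfl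
  rw [pd, h, ContinuousLinearMap.fderiv]
  simp [Pi.single_apply]

lemma pd_comp (f : ℝ → ℝ) {f' : ℝ} (j : Fin 4) (x : Fin 4 → ℝ)
    (hf : HasDerivAt f f' (x 2)) :
    pd j (fun y => f (y 2)) x = if (2:Fin 4) = j then f' else 0 := by
  have h : (fun y : Fin 4 → ℝ => f (y 2))
      = f ∘ ⇑(ContinuousLinearMap.proj (R := ℝ) (φ := fun _ : Fin 4 => ℝ) 2) := rfl
  rw [pd, h, fderiv_comp x hf.differentiableAt
    (ContinuousLinearMap.proj (R := ℝ) (φ := fun _ : Fin 4 => ℝ) 2).differentiableAt]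
  simp [ContinuousLinearMap.fderiv, hf.deriv, Pi.single_apply]

lemma hasDerivAt_update4 (x : Fin 4 → ℝ) (j : Fin 4) (t : ℝ) :
    HasDerivAt (fun s : ℝ => Function.update x j s) (Pi.single j 1) t := by
  have h : (fun s : ℝ => Function.update x j s)
      = fun s : ℝ => x + (s - x j) • (Pi.single j (1:ℝ) : Fin 4 → ℝ) := by
    funext s k
    by_cases hk : k = j <;> simp [Function.update, hk, Pi.single_apply]
  rw [h]
  simpa using (((hasDerivAt_id t).sub_const (x j)).smul_const
    (Pi.single j (1:ℝ) : Fin 4 → ℝ)).const_add x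

lemma pd_deriv (F : (Fin 4 → ℝ) → ℝ) (hF : Differentiable ℝ F) (x : Fin 4 → ℝ)
    (j : Fin 4) (t : ℝ) :
    HasDerivAt (fun s => F (Function.update x j s))
      (pd j F (Function.update x j t)) t :=
  (hF _).hasFDerivAt.comp_hasDerivAt t (hasDerivAt_update4 x j t)

lemma const_of_pd_zero (F : (Fin 4 → ℝ) → ℝ) (hF : Differentiable ℝ F) (j : Fin 4)
    (h : ∀ x, pd j F x = 0) (x : Fin 4 → ℝ) (t : ℝ) :
    F (Function.update x j t) = F x := by
  have hd : ∀ s : ℝ, HasDerivAt (fun s => F (Function.update x j s)) 0 s := by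
    intro s
    have := pd_deriv F hF x j s
    rwa [h] at this
  have := is_const_of_deriv_eq_zero (fun s => (hd s).differentiableAt)
    (fun s => (hd s).deriv) t (x j)
  simpa [Function.update_eq_self] using this

lemma ode_solve (l : ℝ) (hl : l ≠ 0) (f1 f3 : ℝ → ℝ)
    (h1 : ∀ t, HasDerivAt f1 (-(f3 t) / l) t)
    (h3 : ∀ t, HasDerivAt f3 (-(f1 t) / l) t) (t : ℝ) :
    f1 t = f1 0 * cosh (t / l) + (-(f3 0)) * sinh (t / l) ∧
    f3 t = -(f1 0 * sinh (t / l)) - (-(f3 0)) * cosh (t / l) := by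
  have hu : ∀ s : ℝ, HasDerivAt (fun s => (f1 s + f3 s) * exp (s / l)) 0 s := by
    intro s
    have hd := ((h1 s).add (h3 s)).mul (((hasDerivAt_id s).div_const l).exp)
    refine hd.congr_deriv ?_
    simp only [id_eq, Pi.add_apply, Pi.sub_apply]
    ring
  have hv : ∀ s : ℝ, HasDerivAt (fun s => (f1 s - f3 s) * exp (-(s / l))) 0 s := by
    intro s
    have hd := ((h1 s).sub (h3 s)).mul ((((hasDerivAt_id s).div_const l).neg).exp)
    refine hd.congr_deriv ?_
    simp only [id_eq, Pi.add_apply, Pi.sub_apply]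
    ring
  have hu' := is_const_of_deriv_eq_zero (fun s => (hu s).differentiableAt)
    (fun s => (hu s).deriv) t 0
  have hv' := is_const_of_deriv_eq_zero (fun s => (hv s).differentiableAt)
    (fun s => (hv s).deriv) t 0
  simp only [zero_div, neg_zero, Real.exp_zero, mul_one] at hu' hv'
  have hab : exp (t / l) * exp (-(t / l)) = 1 := by
    rw [← Real.exp_add]; simp
  constructor <;> rw [Real.cosh_eq, Real.sinh_eq]
  · linear_combination (exp (-(t / l)) / 2) * hu' + (exp (t / l) / 2) * hv' - (f1 t) * hab
  · linear_combination (exp (-(t / l)) / 2) * hu' - (exp (t / l) / 2) * hv' - (f3 t) * hab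


/-- Class P_{4,6} for λ ≠ 0. -/
theorem class_P46_lambda_ne_zero (l : ℝ) (hl : l ≠ 0)
    (A : (Fin 4 → ℝ) → Fin 4 → ℝ) (hA : ContDiff ℝ 1 A) :
    (PInvariant e1 A ∧ PInvariant e2 A ∧ PInvariant e4 A ∧
      PInvariant (fun x => ![0, x 3, l, x 1]) A) ↔
      ∃ C1 C2 C3 C4 : ℝ,
        ∀ x, A x 0 = C1 ∧ A x 2 = C3 ∧
          A x 1 = C2 * cosh (x 2 / l) + C4 * sinh (x 2 / l) ∧
          A x 3 = -(C2 * sinh (x 2 / l)) - C4 * cosh (x 2 / l) := by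
  have hAd : ∀ i : Fin 4, Differentiable ℝ (fun y => A y i) := fun i =>
    (ContinuousLinearMap.proj (R := ℝ) (φ := fun _ : Fin 4 => ℝ) i).differentiable.comp
      (hA.differentiable one_ne_zero)
  constructor
  · rintro ⟨h1, h2, h4, hx⟩
    have hp0 : ∀ x i, pd 0 (fun y => A y i) x = 0 := by
      intro x i
      have := h1 x i
      simpa [lieCov, e1, Fin.sum_univ_four, pd_const] using this
    have hp1 : ∀ x i, pd 1 (fun y => A y i) x = 0 := by
      intro x i
      have := h2 x i
      simpa [lieCov, e2, Fin.sum_univ_four, pd_const] using this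
    have hp3 : ∀ x i, pd 3 (fun y => A y i) x = 0 := by
      intro x i
      have := h4 x i
      simpa [lieCov, e4, Fin.sum_univ_four, pd_const] using this
    have hODE0 : ∀ x, pd 2 (fun y => A y 0) x = 0 := by
      intro x
      have := hx x 0
      have h' : l * pd 2 (fun y => A y 0) x = 0 := by
        simpa [lieCov, Fin.sum_univ_four, pd_const, pd_proj, hp0, hp1, hp3] using this
      exact (mul_eq_zero.mp h').resolve_left hl
    have hODE2 : ∀ x, pd 2 (fun y => A y 2) x = 0 := by
      intro x
      have := hx x 2
      have h' : l * pd 2 (fun y => A y 2) x = 0 := by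
        simpa [lieCov, Fin.sum_univ_four, pd_const, pd_proj, hp0, hp1, hp3] using this
      exact (mul_eq_zero.mp h').resolve_left hl
    have hODE1 : ∀ x, l * pd 2 (fun y => A y 1) x + A x 3 = 0 := by
      intro x
      have := hx x 1
      simpa [lieCov, Fin.sum_univ_four, pd_const, pd_proj, hp0, hp1, hp3] using this
    have hODE3 : ∀ x, l * pd 2 (fun y => A y 3) x + A x 1 = 0 := by
      intro x
      have := hx x 3
      simpa [lieCov, Fin.sum_univ_four, pd_const, pd_proj, hp0, hp1, hp3] using this
    have key : ∀ (x : Fin 4 → ℝ) (i : Fin 4), A x i = A ![0, 0, x 2, 0] i := by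
      intro x i
      have c0 := const_of_pd_zero _ (hAd i) 0 (fun y => hp0 y i) x 0
      have c1 := const_of_pd_zero _ (hAd i) 1 (fun y => hp1 y i) (Function.update x 0 0) 0
      have c3 := const_of_pd_zero _ (hAd i) 3 (fun y => hp3 y i)
        (Function.update (Function.update x 0 0) 1 0) 0
      have hxx : Function.update (Function.update (Function.update x 0 0) 1 0) 3 0
          = ![0, 0, x 2, 0] := by
        funext k; fin_cases k <;> simp [Function.update]
      rw [← c0, ← c1, ← c3, hxx]
    have hupd : ∀ s : ℝ, Function.update (![0, 0, 0, 0] : Fin 4 → ℝ) 2 s = ![0, 0, s, 0] := by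
      intro s; funext k; fin_cases k <;> simp [Function.update]
    have hD : ∀ (i : Fin 4) (t : ℝ),
        HasDerivAt (fun s : ℝ => A ![0, 0, s, 0] i)
          (pd 2 (fun y => A y i) ![0, 0, t, 0]) t := by
      intro i t
      have := pd_deriv (fun y => A y i) (hAd i) ![0, 0, 0, 0] 2 t
      simpa only [hupd] using this
    have hD1 : ∀ t : ℝ, HasDerivAt (fun s : ℝ => A ![0, 0, s, 0] 1)
        (-(A ![0, 0, t, 0] 3) / l) t := by
      intro t
      have hval : pd 2 (fun y => A y 1) ![0, 0, t, 0] = -(A ![0, 0, t, 0] 3) / l := by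
        have h := hODE1 ![0, 0, t, 0]
        field_simp
        linarith
      have := hD 1 t
      rwa [hval] at this
    have hD3 : ∀ t : ℝ, HasDerivAt (fun s : ℝ => A ![0, 0, s, 0] 3)
        (-(A ![0, 0, t, 0] 1) / l) t := by
      intro t
      have hval : pd 2 (fun y => A y 3) ![0, 0, t, 0] = -(A ![0, 0, t, 0] 1) / l := by
        have h := hODE3 ![0, 0, t, 0]
        field_simp
        linarith
      have := hD 3 t
      rwa [hval] at this
    have hsol := ode_solve l hl (fun s => A ![0, 0, s, 0] 1) (fun s => A ![0, 0, s, 0] 3)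
      hD1 hD3
    have hc0 : ∀ t : ℝ, A ![0, 0, t, 0] 0 = A ![0, 0, 0, 0] 0 := by
      intro t
      have hd : ∀ s : ℝ, HasDerivAt (fun s : ℝ => A ![0, 0, s, 0] 0) 0 s := by
        intro s
        have := hD 0 s
        rwa [hODE0] at this
      exact is_const_of_deriv_eq_zero (fun s => (hd s).differentiableAt)
        (fun s => (hd s).deriv) t 0
    have hc2 : ∀ t : ℝ, A ![0, 0, t, 0] 2 = A ![0, 0, 0, 0] 2 := by
      intro t
      have hd : ∀ s : ℝ, HasDerivAt (fun s : ℝ => A ![0, 0, s, 0] 2) 0 s := by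
        intro s
        have := hD 2 s
        rwa [hODE2] at this
      exact is_const_of_deriv_eq_zero (fun s => (hd s).differentiableAt)
        (fun s => (hd s).deriv) t 0
    refine ⟨A ![0, 0, 0, 0] 0, A ![0, 0, 0, 0] 1, A ![0, 0, 0, 0] 2,
      -(A ![0, 0, 0, 0] 3), fun x => ?_⟩
    obtain ⟨hs1, hs3⟩ := hsol (x 2)
    refine ⟨?_, ?_, ?_, ?_⟩
    · rw [key x 0]; exact hc0 (x 2)
    · rw [key x 2]; exact hc2 (x 2)
    · rw [key x 1]; exact hs1
    · rw [key x 3]; exact hs3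
  · rintro ⟨C1, C2, C3, C4, h⟩
    have hA0 : (fun y => A y 0) = fun _ => C1 := funext fun y => (h y).1
    have hA2 : (fun y => A y 2) = fun _ => C3 := funext fun y => (h y).2.1
    have hA1 : (fun y => A y 1)
        = fun y => C2 * cosh (y 2 / l) + C4 * sinh (y 2 / l) :=
      funext fun y => (h y).2.2.1
    have hA3 : (fun y => A y 3)
        = fun y => -(C2 * sinh (y 2 / l)) - C4 * cosh (y 2 / l) :=
      funext fun y => (h y).2.2.2
    have hg1 : ∀ s : ℝ, HasDerivAt (fun s : ℝ => C2 * cosh (s / l) + C4 * sinh (s / l))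
        ((C2 * sinh (s / l) + C4 * cosh (s / l)) / l) s := by
      intro s
      have := ((((hasDerivAt_id s).div_const l).cosh).const_mul C2).add
        ((((hasDerivAt_id s).div_const l).sinh).const_mul C4)
      simp only [id_eq] at this
      refine this.congr_deriv ?_
      ring
    have hg3 : ∀ s : ℝ, HasDerivAt (fun s : ℝ => -(C2 * sinh (s / l)) - C4 * cosh (s / l))
        ((-(C2 * cosh (s / l)) - C4 * sinh (s / l)) / l) s := by
      intro s
      have := (((((hasDerivAt_id s).div_const l).sinh).const_mul C2).neg).sub
        ((((hasDerivAt_id s).div_const l).cosh).const_mul C4)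
      simp only [id_eq] at this
      refine this.congr_deriv ?_
      ring
    have hp0' : ∀ (j : Fin 4) (x : Fin 4 → ℝ), pd j (fun y => A y 0) x = 0 := by
      intro j x; rw [hA0]; exact pd_const C1 j x
    have hp2' : ∀ (j : Fin 4) (x : Fin 4 → ℝ), pd j (fun y => A y 2) x = 0 := by
      intro j x; rw [hA2]; exact pd_const C3 j x
    have hp1' : ∀ (j : Fin 4) (x : Fin 4 → ℝ), pd j (fun y => A y 1) x
        = if (2:Fin 4) = j then (C2 * sinh (x 2 / l) + C4 * cosh (x 2 / l)) / l else 0 := by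
      intro j x; rw [hA1]
      exact pd_comp (fun s => C2 * cosh (s / l) + C4 * sinh (s / l)) j x (hg1 (x 2))
    have hp3' : ∀ (j : Fin 4) (x : Fin 4 → ℝ), pd j (fun y => A y 3) x
        = if (2:Fin 4) = j then (-(C2 * cosh (x 2 / l)) - C4 * sinh (x 2 / l)) / l else 0 := by
      intro j x; rw [hA3]
      exact pd_comp (fun s => -(C2 * sinh (s / l)) - C4 * cosh (s / l)) j x (hg3 (x 2))
    refine ⟨?_, ?_, ?_, ?_⟩ <;> intro x i <;> fin_cases i <;>
      simp [lieCov, e1, e2, e4, Fin.sum_univ_four, pd_const, hp0', hp1', hp2', hp3',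
        pd_proj, (h x).1, (h x).2.1, (h x).2.2.1, (h x).2.2.2] <;>
      field_simp <;>
      ring
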